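/- arXiv:2504.03464 — 3 statements merged into one kernel-verified Lean document; each statement's English description precedes it below -/
import Mathlib

section
/- Let α be a measurable space and β a standard Borel space, μ a probability measure on α, κ a Markov kernel from α to β, and ν a probability measure on β such that ν ≪ κ(a) for μ-almost every a. Let w : α × β → [0,∞) be a jointly measurable version of the Radon–Nikodym derivative, w(a, b) = (dν/dκ(a))(b). Let g : α × β → ℝ be bounded and measurable. Then, under the measure μ ⊗ κ on α × β (the composition of μ with the kernel κ), the conditional expectation of the function (a, b) ↦ w(a, b)·g(a, b) given the σ-algebra generated by the first projection equals (a, b) ↦ ∫_β g(a, b′) dν(b′) almost everywhere. In particular E_{μ⊗κ}[w·g] = ∫_α ∫_β g(a, b′) dν(b′) dμ(a). (This is the one-period unbiasedness identity E[w_t^F · N_B(Y_t) | H̄_{t−1}*] = N_{Bt}(F, L) showing that the weighted IPW error is a martingale difference sequence.) -/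
/-!
Fibrewise, `w (a, ·)` is a version of `dν/dκ(a)`, so
`∫ w (a, b) g (a, b) dκ(a)(b) = ∫ g (a, b) dν(b)` for μ-a.e. `a`. Conditioning on the first coordinate under `μ ⊗ₘ κ` integrates out the second
coordinate against `κ a`, which gives both claims.
-/

open MeasureTheory ProbabilityTheory

section RadonNikodym

variable {β : Type*} [MeasurableSpace β] {ν ρ : Measure β} {f : β → ℝ}

lemma ae_eq_toReal_rnDeriv_of_ofReal_ae_eq (hf_nonneg : ∀ b, 0 ≤ f b)
    (hf : (fun b => ENNReal.ofReal (f b)) =ᵐ[ρ] ν.rnDeriv ρ) :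
    f =ᵐ[ρ] fun b => (ν.rnDeriv ρ b).toReal := by
  filter_upwards [hf] with b hb
  rw [← hb, ENNReal.toReal_ofReal (hf_nonneg b)]

lemma integrable_of_ae_eq_toReal_rnDeriv [IsFiniteMeasure ν]
    (hf : f =ᵐ[ρ] fun b => (ν.rnDeriv ρ b).toReal) : Integrable f ρ :=
  Measure.integrable_toReal_rnDeriv.congr hf.symm

lemma integral_mul_eq_of_ae_eq_toReal_rnDeriv [ν.HaveLebesgueDecomposition ρ] [SigmaFinite ν]
    (hac : ν ≪ ρ) (hf : f =ᵐ[ρ] fun b => (ν.rnDeriv ρ b).toReal) (g : β → ℝ) :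
    ∫ b, f b * g b ∂ρ = ∫ b, g b ∂ν := by
  rw [← integral_toReal_rnDeriv_mul hac]
  refine integral_congr_ae ?_
  filter_upwards [hf] with b hb
  rw [hb]

end RadonNikodym

section CompProd

variable {α β : Type*} [MeasurableSpace α] [MeasurableSpace β] {μ : Measure α} {κ : Kernel α β}

lemma integrable_compProd_of_ae_eq_toReal_rnDeriv [IsFiniteMeasure μ] [IsFiniteKernel κ]
    {ν : Measure β} [IsFiniteMeasure ν] (hac : ∀ᵐ a ∂μ, ν ≪ κ a) {w : α × β → ℝ}
    (hw_meas : AEStronglyMeasurable w (μ ⊗ₘ κ))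
    (hw : ∀ᵐ a ∂μ, (fun b => w (a, b)) =ᵐ[κ a] fun b => (ν.rnDeriv (κ a) b).toReal) :
    Integrable w (μ ⊗ₘ κ) := by
  refine (Measure.integrable_compProd_iff hw_meas).2
    ⟨by filter_upwards [hw] with a ha using integrable_of_ae_eq_toReal_rnDeriv ha, ?_⟩
  refine (integrable_const (ν.real Set.univ)).congr ?_
  filter_upwards [hw, hac] with a ha hac_a
  have h_norm : (fun b => ‖w (a, b)‖) =ᵐ[κ a] fun b => w (a, b) := by
    filter_upwards [ha] with b hb
    rw [hb, Real.norm_of_nonneg ENNReal.toReal_nonneg]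
  rw [integral_congr_ae h_norm]
  simpa using (integral_mul_eq_of_ae_eq_toReal_rnDeriv hac_a ha 1).symm

theorem condExp_comap_fst_compProd_ae_eq [IsFiniteMeasure μ] [IsMarkovKernel κ]
    {E : Type*} [NormedAddCommGroup E] [NormedSpace ℝ E] [CompleteSpace E]
    {f : α × β → E} (hf_sm : StronglyMeasurable f) (hf : Integrable f (μ ⊗ₘ κ)) :
    (μ ⊗ₘ κ)[f|MeasurableSpace.comap Prod.fst inferInstance]
      =ᵐ[μ ⊗ₘ κ] fun p => ∫ b, f (p.1, b) ∂κ p.1 := by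
  set F : α → E := fun a => ∫ b, f (a, b) ∂κ a
  have hF_int : Integrable (fun p : α × β => F p.1) (μ ⊗ₘ κ) := by
    have h : Integrable F μ := by
      rw [Measure.compProd] at hf
      simpa using hf.integral_compProd
    rw [← Measure.fst_compProd μ κ, Measure.fst] at h
    exact h.comp_measurable measurable_fst
  refine (ae_eq_condExp_of_forall_setIntegral_eq measurable_fst.comap_le hf
    (fun s _ _ => hF_int.integrableOn) ?_ ?_).symm
  · rintro s ⟨t, ht, rfl⟩ _
    rw [← Set.prod_univ, Measure.setIntegral_compProd ht .univ hF_int.integrableOn,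
      Measure.setIntegral_compProd ht .univ hf.integrableOn]
    simp [F]
  · exact (hf_sm.integral_kernel_prod_right'.comp_measurable
      (comap_measurable Prod.fst)).aestronglyMeasurable

end CompProd

theorem stmt_1_general
    {α β : Type*} [MeasurableSpace α] [MeasurableSpace β]
    (μ : Measure α) [IsProbabilityMeasure μ]
    (κ : Kernel α β) [IsMarkovKernel κ]
    (ν : Measure β) [IsProbabilityMeasure ν]
    (hac : ∀ᵐ a ∂μ, ν ≪ κ a)
    (w : α × β → ℝ) (hw_meas : Measurable w) (hw_nonneg : ∀ p, 0 ≤ w p)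
    (hw : ∀ᵐ a ∂μ, (fun b => ENNReal.ofReal (w (a, b))) =ᵐ[κ a] ν.rnDeriv (κ a))
    (g : α × β → ℝ) (hg_meas : Measurable g) (Cg : ℝ) (hg_bdd : ∀ p, |g p| ≤ Cg) :
    ((μ ⊗ₘ κ)[fun p => w p * g p|
        MeasurableSpace.comap (Prod.fst : α × β → α) inferInstance]
      =ᵐ[μ ⊗ₘ κ] fun p => ∫ b', g (p.1, b') ∂ν)
    ∧ ∫ p, w p * g p ∂(μ ⊗ₘ κ) = ∫ a, ∫ b', g (a, b') ∂ν ∂μ := by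
  have hw_real : ∀ᵐ a ∂μ, (fun b => w (a, b)) =ᵐ[κ a] fun b => (ν.rnDeriv (κ a) b).toReal := by
    filter_upwards [hw] with a ha
    exact ae_eq_toReal_rnDeriv_of_ofReal_ae_eq (fun b => hw_nonneg (a, b)) ha
  have hkey : ∀ᵐ a ∂μ, ∫ b, w (a, b) * g (a, b) ∂κ a = ∫ b, g (a, b) ∂ν := by
    filter_upwards [hw_real, hac] with a ha hac_a
    exact integral_mul_eq_of_ae_eq_toReal_rnDeriv hac_a ha _
  have hwg_int : Integrable (fun p => w p * g p) (μ ⊗ₘ κ) := by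
    simpa only [mul_comm] using (integrable_compProd_of_ae_eq_toReal_rnDeriv hac
      hw_meas.aestronglyMeasurable hw_real).bdd_mul hg_meas.aestronglyMeasurable
      (.of_forall hg_bdd)
  have hwg_sm : StronglyMeasurable (fun p => w p * g p) := (hw_meas.mul hg_meas).stronglyMeasurable
  refine ⟨(condExp_comap_fst_compProd_ae_eq hwg_sm hwg_int).trans ?_, ?_⟩
  · exact Measure.ae_compProd_of_ae_fst κ (measurableSet_eq_fun
      hwg_sm.integral_kernel_prod_right'.measurable
      hg_meas.stronglyMeasurable.integral_prod_right'.measurable) hkey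
  · rw [Measure.integral_compProd hwg_int]
    exact integral_congr_ae hkey

/-- One-period unbiasedness identity for the importance weight: under `μ ⊗ₘ κ`, the
conditional expectation of `w · g` given the σ-algebra generated by the first
projection is `(a, b) ↦ ∫ g(a, b′) dν(b′)`, where `w` is a jointly measurable version
of the Radon–Nikodym derivative `dν/dκ(a)`; in particular the expectations match. -/
theorem stmt_1
    {α β : Type*} [MeasurableSpace α] [MeasurableSpace β] [StandardBorelSpace β]
    (μ : Measure α) [IsProbabilityMeasure μ]
    (κ : Kernel α β) [IsMarkovKernel κ]
    (ν : Measure β) [IsProbabilityMeasure ν]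
    (hac : ∀ᵐ a ∂μ, ν ≪ κ a)
    (w : α × β → ℝ) (hw_meas : Measurable w) (hw_nonneg : ∀ p, 0 ≤ w p)
    (hw : ∀ᵐ a ∂μ, (fun b => ENNReal.ofReal (w (a, b))) =ᵐ[κ a] ν.rnDeriv (κ a))
    (g : α × β → ℝ) (hg_meas : Measurable g) (Cg : ℝ) (hg_bdd : ∀ p, |g p| ≤ Cg) :
    ((μ ⊗ₘ κ)[fun p => w p * g p|
        MeasurableSpace.comap (Prod.fst : α × β → α) inferInstance]
      =ᵐ[μ ⊗ₘ κ] fun p => ∫ b', g (p.1, b') ∂ν)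
    ∧ ∫ p, w p * g p ∂(μ ⊗ₘ κ) = ∫ a, ∫ b', g (a, b') ∂ν ∂μ :=
  stmt_1_general μ κ ν hac w hw_meas hw_nonneg hw g hg_meas Cg hg_bdd
end

section
/- Let α be a measurable space, β and γ standard Borel spaces, μ a probability measure on α (the history), e a Markov kernel from α to β (the treatment propensity), ρ a Markov kernel from α × β to γ (the mediator score), F_W a probability measure on β (the treatment intervention), and F_M a Markov kernel from β to γ (the mediator intervention). Assume F_W ≪ e(a) for μ-a.e. a and F_M(b) ≪ ρ(a, b) for (μ ⊗ e)-a.e. (a, b). Define the weight w(a, b, m) = (dF_W/de(a))(b) · (dF_M(b)/dρ(a, b))(m) using jointly measurable versions of the Radon–Nikodym derivatives. Then for every bounded measurable g : α × β × γ → ℝ, ∫ w(a, b, m)·g(a, b, m) d((μ ⊗ e) ⊗ ρ) = ∫_α ∫_β ∫_γ g(a, b, m) d(F_M(b))(m) dF_W(b) dμ(a). (This is the treatment-plus-mediator change-of-measure identity underlying the unbiasedness of the mediation IPW estimator with stochastic intervention F = (F_W, F_{M|W}).) -/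
open MeasureTheory ProbabilityTheory
open scoped ENNReal NNReal

/-- Treatment-plus-mediator change-of-measure identity: integrating the product of the
treatment weight `dF_W/de(a)` and the mediator weight `dF_M(b)/dρ(a,b)` against a
bounded measurable `g` under `(μ ⊗ₘ e) ⊗ₘ ρ` equals the iterated integral of `g`
under the stochastic intervention `(F_W, F_M)`. -/
theorem stmt_3
    {α β γ : Type*} [MeasurableSpace α] [MeasurableSpace β] [StandardBorelSpace β]
    [MeasurableSpace γ] [StandardBorelSpace γ]
    (μ : Measure α) [IsProbabilityMeasure μ]
    (e : Kernel α β) [IsMarkovKernel e]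
    (ρ : Kernel (α × β) γ) [IsMarkovKernel ρ]
    (FW : Measure β) [IsProbabilityMeasure FW]
    (FM : Kernel β γ) [IsMarkovKernel FM]
    (hacW : ∀ᵐ a ∂μ, FW ≪ e a)
    (hacM : ∀ᵐ p ∂(μ ⊗ₘ e), FM p.2 ≪ ρ p)
    (w₁ : α × β → ℝ) (hw₁_meas : Measurable w₁) (hw₁_nonneg : ∀ p, 0 ≤ w₁ p)
    (hw₁ : ∀ᵐ a ∂μ, (fun b => ENNReal.ofReal (w₁ (a, b))) =ᵐ[e a] FW.rnDeriv (e a))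
    (w₂ : (α × β) × γ → ℝ) (hw₂_meas : Measurable w₂) (hw₂_nonneg : ∀ q, 0 ≤ w₂ q)
    (hw₂ : ∀ᵐ p ∂(μ ⊗ₘ e),
      (fun m => ENNReal.ofReal (w₂ (p, m))) =ᵐ[ρ p] (FM p.2).rnDeriv (ρ p))
    (g : α × β × γ → ℝ) (hg_meas : Measurable g) (Cg : ℝ)
    (hg_bdd : ∀ x, |g x| ≤ Cg) :
    ∫ q, w₁ q.1 * w₂ q * g (q.1.1, q.1.2, q.2) ∂((μ ⊗ₘ e) ⊗ₘ ρ)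
      = ∫ a, ∫ b, ∫ m, g (a, b, m) ∂(FM b) ∂FW ∂μ := by
  classical
  set e' : Kernel α β := Kernel.const α FW with he'
  set ρ' : Kernel (α × β) γ := FM.comap Prod.snd measurable_snd with hρ'def
  have hρ'A : ∀ p : α × β, ρ' p = FM p.2 := fun p => rfl
  -- measure equality
  have hMeq : (((μ ⊗ₘ e) ⊗ₘ ρ).withDensity
      fun q => ENNReal.ofReal (w₁ q.1) * ENNReal.ofReal (w₂ q))
      = (μ ⊗ₘ e') ⊗ₘ ρ' := by
    have hw1m : Measurable fun q : (α × β) × γ => ENNReal.ofReal (w₁ q.1) :=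
      ENNReal.measurable_ofReal.comp (hw₁_meas.comp measurable_fst)
    have hw2m : Measurable fun q : (α × β) × γ => ENNReal.ofReal (w₂ q) :=
      ENNReal.measurable_ofReal.comp hw₂_meas
    ext s hs
    have hind : Measurable (s.indicator (fun _ => (1 : ℝ≥0∞))) :=
      measurable_one.indicator hs
    rw [withDensity_apply _ hs, ← lintegral_indicator hs]
    have h1 : ∀ q, s.indicator (fun q => ENNReal.ofReal (w₁ q.1) * ENNReal.ofReal (w₂ q)) q
        = ENNReal.ofReal (w₁ q.1) * (ENNReal.ofReal (w₂ q) * s.indicator (fun _ => 1) q) := by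
      intro q
      simp only [Set.indicator_apply]
      split_ifs <;> simp
    simp only [h1]
    rw [Measure.lintegral_compProd (by fun_prop)]
    have hmid : ∫⁻ p, ∫⁻ m, ENNReal.ofReal (w₁ p) *
          (ENNReal.ofReal (w₂ (p, m)) * s.indicator (fun _ => 1) (p, m)) ∂ρ p ∂(μ ⊗ₘ e)
        = ∫⁻ p, ENNReal.ofReal (w₁ p) * (FM p.2) (Prod.mk p ⁻¹' s) ∂(μ ⊗ₘ e) := by
      refine lintegral_congr_ae ?_
      filter_upwards [hacM, hw₂] with p hac heq
      rw [lintegral_const_mul _ (by fun_prop)]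
      congr 1
      have h2 : ∫⁻ m, ENNReal.ofReal (w₂ (p, m)) * s.indicator (fun _ => 1) (p, m) ∂ρ p
          = ∫⁻ m, (FM p.2).rnDeriv (ρ p) m * s.indicator (fun _ => 1) (p, m) ∂ρ p := by
        refine lintegral_congr_ae ?_
        filter_upwards [heq] with m hm
        rw [hm]
      rw [h2, MeasureTheory.lintegral_rnDeriv_mul hac (by fun_prop)]
      have h3 : ∀ m, s.indicator (fun _ => (1 : ℝ≥0∞)) (p, m)
          = (Prod.mk p ⁻¹' s).indicator (fun _ => (1 : ℝ≥0∞)) m := by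
        intro m; simp [Set.indicator_apply]
      simp_rw [h3]
      exact lintegral_indicator_one (measurable_prodMk_left hs)
    rw [hmid, Measure.lintegral_compProd ?_]
    swap
    · exact (ENNReal.measurable_ofReal.comp hw₁_meas).mul
        (Kernel.measurable_kernel_prodMk_left (κ := ρ') hs)
    rw [Measure.compProd_apply hs, Measure.lintegral_compProd
      (Kernel.measurable_kernel_prodMk_left (κ := ρ') hs)]
    refine lintegral_congr_ae ?_
    filter_upwards [hacW, hw₁] with a hac heq
    have h4 : ∫⁻ b, ENNReal.ofReal (w₁ (a, b)) * (FM b) (Prod.mk (a, b) ⁻¹' s) ∂e a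
        = ∫⁻ b, FW.rnDeriv (e a) b * (FM b) (Prod.mk (a, b) ⁻¹' s) ∂e a := by
      refine lintegral_congr_ae ?_
      filter_upwards [heq] with b hb
      rw [hb]
    rw [h4, MeasureTheory.lintegral_rnDeriv_mul hac]
    · rfl
    · exact (Kernel.measurable_kernel_prodMk_left (κ := ρ') hs).comp
        (measurable_prodMk_left) |>.aemeasurable
  -- now the integrals
  have hprob : IsProbabilityMeasure ((μ ⊗ₘ e') ⊗ₘ ρ') := by infer_instance
  have hgb : ∀ x : α × β × γ, ‖g x‖ ≤ Cg := fun x => by simpa using hg_bdd x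
  have hLHS : ∫ q, w₁ q.1 * w₂ q * g (q.1.1, q.1.2, q.2) ∂((μ ⊗ₘ e) ⊗ₘ ρ)
      = ∫ q, g (q.1.1, q.1.2, q.2) ∂((μ ⊗ₘ e') ⊗ₘ ρ') := by
    rw [← hMeq]
    have hd : (((μ ⊗ₘ e) ⊗ₘ ρ).withDensity
        fun q => ENNReal.ofReal (w₁ q.1) * ENNReal.ofReal (w₂ q))
        = ((μ ⊗ₘ e) ⊗ₘ ρ).withDensity
          (fun q => ((w₁ q.1 * w₂ q).toNNReal : ℝ≥0∞)) := by
      refine withDensity_congr_ae (Filter.EventuallyEq.of_eq (funext fun q => ?_))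
      rw [← ENNReal.ofReal_mul (hw₁_nonneg _)]
      rfl
    rw [hd, integral_withDensity_eq_integral_smul (by fun_prop)]
    congr 1
    funext q
    simp [NNReal.smul_def, Real.toNNReal_of_nonneg
      (mul_nonneg (hw₁_nonneg _) (hw₂_nonneg _)), mul_assoc]
  rw [hLHS]
  have hint : Integrable (fun q : (α × β) × γ => g (q.1.1, q.1.2, q.2)) ((μ ⊗ₘ e') ⊗ₘ ρ') := by
    refine Integrable.mono' (integrable_const Cg)
      ((hg_meas.comp (by fun_prop)).aestronglyMeasurable) (ae_of_all _ fun q => hgb _)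
  rw [Measure.integral_compProd hint]
  have hin2 : ∀ p : α × β, ‖∫ m, g (p.1, p.2, m) ∂(FM p.2)‖ ≤ Cg := by
    intro p
    calc ‖∫ m, g (p.1, p.2, m) ∂(FM p.2)‖ ≤ Cg * ((FM p.2) Set.univ).toReal :=
      norm_integral_le_of_norm_le_const (ae_of_all _ fun m => hgb _)
    _ = Cg := by simp
  have hsm : StronglyMeasurable fun p : α × β => ∫ m, g (p.1, p.2, m) ∂(ρ' p) :=
    (hg_meas.comp (by fun_prop : Measurable fun q : (α × β) × γ =>
      (q.1.1, q.1.2, q.2))).stronglyMeasurable.integral_kernel_prod_right'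
  have hint2 : Integrable (fun p : α × β => ∫ m, g (p.1, p.2, m) ∂(FM p.2)) (μ ⊗ₘ e') := by
    refine Integrable.mono' (integrable_const Cg) hsm.aestronglyMeasurable
      (ae_of_all _ fun p => hin2 _)
  rw [show (fun p : α × β => ∫ m, g (p.1, p.2, m) ∂(ρ' p))
      = fun p : α × β => ∫ m, g (p.1, p.2, m) ∂(FM p.2) from rfl,
    Measure.integral_compProd hint2]
  rfl
end

section
/- Let β be a standard Borel space, L a positive natural number, ν a probability measure on β, and for each k < L let κ_k be a Markov kernel from the space of partial trajectories (Π_{i : Fin k} β) to β, with ν ≪ κ_k(b_{<k}) almost everywhere under the sequentially composed measure. Let P_L denote the probability measure on Π_{i : Fin L} β obtained by composing κ_0, κ_1, …, κ_{L−1} sequentially (each κ_k conditioned on the first k coordinates), and define the L-period weight w(b) = ∏_{k<L} (dν/dκ_k(b_{<k}))(b_k) using jointly measurable versions of the Radon–Nikodym derivatives. Then for every bounded measurable h : (Π_{i : Fin L} β) → ℝ, ∫ w·h dP_L = ∫ h d(⊗_{i : Fin L} ν), where ⊗_{i : Fin L} ν is the L-fold product of ν. (This is the general-L sequential change-of-measure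 identity behind the IPW weight w_t(F) = ∏_{t′=t−L+1}^{t} f(W_{t′})/e_{t′}(W_{t′}), equation (9) of the paper.) -/
open MeasureTheory ProbabilityTheory

/-- The probability measure on trajectories of length `L` obtained by sequentially
composing the kernels `κ 0, κ 1, …, κ (L-1)`: draw `b 0 ∼ κ 0`, then
`b 1 ∼ κ 1 (b 0)`, and so on. -/
noncomputable def seqComp {β : Type*} [MeasurableSpace β]
    (κ : ∀ k : ℕ, Kernel (∀ _ : Fin k, β) β) [∀ k, IsMarkovKernel (κ k)] :
    (L : ℕ) → Measure (∀ _ : Fin L, β)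
  | 0 => Measure.dirac (fun i => i.elim0)
  | (L + 1) =>
      Measure.map (fun p => Fin.snoc p.1 p.2) ((seqComp κ L) ⊗ₘ (κ L))

/-!
Induction on `L`. Since `seqComp κ (L + 1)` is the image of `seqComp κ L ⊗ₘ κ L` under
`Fin.snoc`, integrating out the last coordinate first turns the last weight factor
`dν/dκ_L(a)` into a change of measure from `κ_L(a)` to `ν`, for almost every history `a`.
The induction hypothesis then replaces `seqComp κ L`, weighted by the first `L` factors, with
`ν^⊗L`, and Tonelli reassembles `ν^⊗(L+1)`. Hence `seqComp κ L` with density `w` is `ν^⊗L`,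
and the identity for `h` is integration against this density.
-/

open scoped ENNReal

section SeqComp

variable {β : Type*} [MeasurableSpace β]

theorem measurable_finSnoc {L : ℕ} :
    Measurable fun p : (Fin L → β) × β => (Fin.snoc p.1 p.2 : Fin (L + 1) → β) := by
  refine measurable_pi_lambda _ fun i => Fin.lastCases ?_ (fun j => ?_) i
  · simpa using measurable_snd
  · simp only [Fin.snoc_castSucc]
    exact (measurable_pi_apply j).comp measurable_fst

instance isProbabilityMeasure_seqComp (κ : ∀ k : ℕ, Kernel (Fin k → β) β)
    [∀ k, IsMarkovKernel (κ k)] (L : ℕ) : IsProbabilityMeasure (seqComp κ L) := by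
  induction L with
  | zero => rw [seqComp]; infer_instance
  | succ L _ =>
    rw [seqComp]
    exact Measure.isProbabilityMeasure_map measurable_finSnoc.aemeasurable

theorem lintegral_seqComp_succ (κ : ∀ k : ℕ, Kernel (Fin k → β) β) [∀ k, IsMarkovKernel (κ k)]
    {L : ℕ} {f : (Fin (L + 1) → β) → ℝ≥0∞} (hf : Measurable f) :
    ∫⁻ b, f b ∂seqComp κ (L + 1) = ∫⁻ a, ∫⁻ x, f (Fin.snoc a x) ∂κ L a ∂seqComp κ L := by
  have hf_snoc : Measurable fun p : (Fin L → β) × β => f (Fin.snoc p.1 p.2) :=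
    hf.comp measurable_finSnoc
  rw [seqComp, lintegral_map hf measurable_finSnoc, Measure.lintegral_compProd hf_snoc]

theorem lintegral_pi_succ (ν : Measure β) [SigmaFinite ν] {L : ℕ}
    {f : (Fin (L + 1) → β) → ℝ≥0∞} (hf : Measurable f) :
    ∫⁻ b, f b ∂Measure.pi (fun _ => ν)
      = ∫⁻ a, ∫⁻ x, f (Fin.snoc a x) ∂ν ∂Measure.pi (fun _ : Fin L => ν) := by
  rw [← (measurePreserving_piFinSuccAbove (fun _ => ν) (Fin.last L)).symm.lintegral_comp hf]
  have hsnoc : ∀ q : β × (Fin L → β),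
      (MeasurableEquiv.piFinSuccAbove (fun _ => β) (Fin.last L)).symm q = Fin.snoc q.2 q.1 := by
    intro q
    simp [MeasurableEquiv.piFinSuccAbove, Fin.insertNthEquiv, Fin.insertNth_last']
  have hf_snoc : Measurable fun q : β × (Fin L → β) => f (Fin.snoc q.2 q.1) :=
    hf.comp (measurable_finSnoc.comp measurable_swap)
  simp only [hsnoc]
  rw [lintegral_prod _ hf_snoc.aemeasurable]
  exact lintegral_lintegral_swap hf_snoc.aemeasurable

end SeqComp

theorem lintegral_mul_eq_lintegral_of_ae_eq_rnDeriv {α : Type*} [MeasurableSpace α]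
    {μ ν : Measure α} [SigmaFinite μ] [SigmaFinite ν] (hνμ : ν ≪ μ) {ω : α → ℝ≥0∞}
    (hω : ω =ᵐ[μ] ν.rnDeriv μ) {g : α → ℝ≥0∞} (hg : AEMeasurable g μ) :
    ∫⁻ x, ω x * g x ∂μ = ∫⁻ x, g x ∂ν := by
  rw [← lintegral_rnDeriv_mul hνμ hg]
  exact lintegral_congr_ae (hω.mono fun x hx => congrArg (· * g x) hx)

section TrajWeight

variable {β : Type*} {M : Type*} [CommMonoid M]

def trajWeight (w : ∀ k : ℕ, (Fin k → β) → β → M) {L : ℕ} (b : Fin L → β) : M :=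
  ∏ k : Fin L, w k.1 (fun i : Fin k.1 => b (Fin.castLE k.isLt.le i)) (b k)

theorem trajWeight_snoc (w : ∀ k : ℕ, (Fin k → β) → β → M) {L : ℕ} (a : Fin L → β) (x : β) :
    trajWeight w (Fin.snoc a x : Fin (L + 1) → β) = trajWeight w a * w L a x := by
  have hist_snoc : ∀ m (hm : m ≤ L) (i : Fin m),
      (Fin.snoc a x : Fin (L + 1) → β) (Fin.castLE (hm.trans L.le_succ) i) = a (Fin.castLE hm i) :=
    fun _ _ i => Fin.snoc_castSucc (α := fun _ => β) x a (Fin.castLE _ i)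
  simp only [trajWeight, Fin.prod_univ_castSucc, Fin.val_castSucc, Fin.val_last,
    Fin.snoc_castSucc, Fin.snoc_last]
  congr 1
  · exact Finset.prod_congr rfl fun k _ =>
      congrArg (w k · (a k)) (funext (hist_snoc k k.isLt.le))
  · exact congrArg (w L · x) (funext (hist_snoc L le_rfl))

theorem measurable_trajWeight [MeasurableSpace β] [MeasurableSpace M] [MeasurableMul₂ M]
    {w : ∀ k : ℕ, (Fin k → β) → β → M} (hw : ∀ k, Measurable (Function.uncurry (w k)))
    {L : ℕ} : Measurable (trajWeight w : (Fin L → β) → M) :=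
  Finset.measurable_prod _ fun k _ => (hw k.1).comp (f := fun b : Fin L → β =>
    ((fun i : Fin k.1 => b (Fin.castLE k.isLt.le i)), b k))
    ((measurable_pi_lambda _ fun _ => measurable_pi_apply _).prodMk (measurable_pi_apply _))

theorem ofReal_trajWeight {w : ∀ k : ℕ, (Fin k → β) → β → ℝ} (hw : ∀ k hist b, 0 ≤ w k hist b)
    {L : ℕ} (b : Fin L → β) :
    ENNReal.ofReal (trajWeight w b) = trajWeight (fun k hist x => ENNReal.ofReal (w k hist x)) b :=
  ENNReal.ofReal_prod_of_nonneg fun _ _ => hw ..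

end TrajWeight

section ChangeOfMeasure

variable {β : Type*} [MeasurableSpace β] (ν : Measure β) [SigmaFinite ν]
  (κ : ∀ k : ℕ, Kernel (Fin k → β) β) [∀ k, IsMarkovKernel (κ k)]
  {ω : ∀ k : ℕ, (Fin k → β) → β → ℝ≥0∞}

theorem lintegral_trajWeight_mul_seqComp (hω_meas : ∀ k, Measurable (Function.uncurry (ω k)))
    {L : ℕ} (hac : ∀ k : Fin L, ∀ᵐ hist ∂seqComp κ k.1, ν ≪ κ k.1 hist)
    (hω : ∀ k : Fin L, ∀ᵐ hist ∂seqComp κ k.1, ω k.1 hist =ᵐ[κ k.1 hist] ν.rnDeriv (κ k.1 hist))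
    {f : (Fin L → β) → ℝ≥0∞} (hf : Measurable f) :
    ∫⁻ b, trajWeight ω b * f b ∂seqComp κ L = ∫⁻ b, f b ∂Measure.pi (fun _ => ν) := by
  induction L with
  | zero =>
    have hdirac : seqComp κ 0 = Measure.pi (fun _ => ν) := by
      rw [seqComp, Measure.pi_of_empty]
      congr
    simp [hdirac, trajWeight]
  | succ L ih =>
    have hf_snoc : Measurable fun p : (Fin L → β) × β => f (Fin.snoc p.1 p.2) :=
      hf.comp measurable_finSnoc
    have step : ∀ᵐ a ∂seqComp κ L,
        ∫⁻ x, trajWeight ω a * (ω L a x * f (Fin.snoc a x)) ∂κ L a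
          = trajWeight ω a * ∫⁻ x, f (Fin.snoc a x) ∂ν := by
      filter_upwards [hac (Fin.last L), hω (Fin.last L)] with a hac_a hω_a
      have hf_a : Measurable fun x => f (Fin.snoc a x) := hf_snoc.comp measurable_prodMk_left
      have hωf_a : Measurable fun x => ω L a x * f (Fin.snoc a x) :=
        ((hω_meas L).comp measurable_prodMk_left).mul hf_a
      rw [lintegral_const_mul _ hωf_a,
        lintegral_mul_eq_lintegral_of_ae_eq_rnDeriv (μ := κ L a) (ω := ω L a) hac_a hω_a
          hf_a.aemeasurable]
    calc ∫⁻ b, trajWeight ω b * f b ∂seqComp κ (L + 1)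
        = ∫⁻ a, ∫⁻ x, trajWeight ω a * (ω L a x * f (Fin.snoc a x)) ∂κ L a ∂seqComp κ L := by
          rw [lintegral_seqComp_succ κ (f := fun b => trajWeight ω b * f b)
            ((measurable_trajWeight hω_meas).mul hf)]
          simp only [trajWeight_snoc, mul_assoc]
      _ = ∫⁻ a, trajWeight ω a * ∫⁻ x, f (Fin.snoc a x) ∂ν ∂seqComp κ L := lintegral_congr_ae step
      _ = ∫⁻ a, ∫⁻ x, f (Fin.snoc a x) ∂ν ∂Measure.pi (fun _ => ν) :=
          ih (fun k => hac k.castSucc) (fun k => hω k.castSucc) hf_snoc.lintegral_prod_right'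
      _ = ∫⁻ b, f b ∂Measure.pi (fun _ => ν) := (lintegral_pi_succ ν hf).symm

theorem withDensity_trajWeight_seqComp (hω_meas : ∀ k, Measurable (Function.uncurry (ω k)))
    {L : ℕ} (hac : ∀ k : Fin L, ∀ᵐ hist ∂seqComp κ k.1, ν ≪ κ k.1 hist)
    (hω : ∀ k : Fin L, ∀ᵐ hist ∂seqComp κ k.1, ω k.1 hist =ᵐ[κ k.1 hist] ν.rnDeriv (κ k.1 hist)) :
    (seqComp κ L).withDensity (trajWeight ω) = Measure.pi (fun _ => ν) := by
  ext s hs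
  rw [withDensity_apply _ hs, ← lintegral_indicator_one hs,
    ← lintegral_trajWeight_mul_seqComp ν κ hω_meas hac hω (measurable_one.indicator hs),
    ← lintegral_indicator hs]
  congr with b
  by_cases hb : b ∈ s <;> simp [hb]

end ChangeOfMeasure

theorem stmt_5_general
    {β : Type*} [MeasurableSpace β]
    (L : ℕ)
    (ν : Measure β) [IsProbabilityMeasure ν]
    (κ : ∀ k : ℕ, Kernel (∀ _ : Fin k, β) β) [∀ k, IsMarkovKernel (κ k)]
    (hac : ∀ k : Fin L, ∀ᵐ hist ∂(seqComp κ k.1), ν ≪ κ k.1 hist)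
    (w : ∀ k : ℕ, (∀ _ : Fin k, β) → β → ℝ)
    (hw_meas : ∀ k, Measurable (Function.uncurry (w k)))
    (hw_nonneg : ∀ k hist b, 0 ≤ w k hist b)
    (hw : ∀ k : Fin L, ∀ᵐ hist ∂(seqComp κ k.1),
      (fun b => ENNReal.ofReal (w k.1 hist b)) =ᵐ[κ k.1 hist] ν.rnDeriv (κ k.1 hist))
    (h : (∀ _ : Fin L, β) → ℝ) :
    ∫ b, (∏ k : Fin L, w k.1 (fun i : Fin k.1 => b (Fin.castLE k.isLt.le i)) (b k)) * h b
        ∂(seqComp κ L)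
      = ∫ b, h b ∂(Measure.pi fun _ : Fin L => ν) := by
  have hdensity : (seqComp κ L).withDensity (fun b => ENNReal.ofReal (trajWeight w b))
      = Measure.pi fun _ => ν := by
    simp only [ofReal_trajWeight hw_nonneg]
    exact withDensity_trajWeight_seqComp ν κ (ω := fun k hist x => ENNReal.ofReal (w k hist x))
      (fun k => (hw_meas k).ennreal_ofReal) hac hw
  have hW_nonneg (b : Fin L → β) : 0 ≤ trajWeight w b :=
    Finset.prod_nonneg fun _ _ => hw_nonneg ..
  rw [← hdensity, integral_withDensity_eq_integral_toReal_smul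
    (measurable_trajWeight hw_meas).ennreal_ofReal (.of_forall fun _ => ENNReal.ofReal_lt_top)]
  congr with b
  rw [ENNReal.toReal_ofReal (hW_nonneg b), smul_eq_mul]
  rfl

/-- General-`L` sequential change-of-measure identity: integrating the product of the
`L` period-by-period importance weights against a bounded measurable `h` under the
sequentially composed observed measure equals the integral of `h` under the `L`-fold
product of the intervention measure `ν`. -/
theorem stmt_5
    {β : Type*} [MeasurableSpace β] [StandardBorelSpace β]
    (L : ℕ) (hL : 0 < L)
    (ν : Measure β) [IsProbabilityMeasure ν]
    (κ : ∀ k : ℕ, Kernel (∀ _ : Fin k, β) β) [∀ k, IsMarkovKernel (κ k)]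
    (hac : ∀ k : Fin L, ∀ᵐ hist ∂(seqComp κ k.1), ν ≪ κ k.1 hist)
    (w : ∀ k : ℕ, (∀ _ : Fin k, β) → β → ℝ)
    (hw_meas : ∀ k, Measurable (Function.uncurry (w k)))
    (hw_nonneg : ∀ k hist b, 0 ≤ w k hist b)
    (hw : ∀ k : Fin L, ∀ᵐ hist ∂(seqComp κ k.1),
      (fun b => ENNReal.ofReal (w k.1 hist b)) =ᵐ[κ k.1 hist] ν.rnDeriv (κ k.1 hist))
    (h : (∀ _ : Fin L, β) → ℝ) (hh_meas : Measurable h) (Ch : ℝ)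
    (hh_bdd : ∀ b, |h b| ≤ Ch) :
    ∫ b, (∏ k : Fin L, w k.1 (fun i : Fin k.1 => b (Fin.castLE k.isLt.le i)) (b k)) * h b
        ∂(seqComp κ L)
      = ∫ b, h b ∂(Measure.pi fun _ : Fin L => ν) :=
  stmt_5_general L ν κ hac w hw_meas hw_nonneg hw h
end
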